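/- arXiv:2501.05753 — 2 statements merged into one kernel-verified Lean document; each statement's English description precedes it below -/
import Mathlib

section
/- For all i, j, k ∈ {1, …, l+1}, the function μ·Υ_{ijk}(μ) tends, as |μ| → ∞, to −1/(2(l−2)) when i = j = k = l+1, and to 0 otherwise. Consequently the residue of Υ_{ijk} at infinity (defined as −lim_{|μ|→∞} μ·Υ_{ijk}(μ)) equals δ_{i,l+1}·δ_{j,l+1}·δ_{k,l+1}/(2(l−2)). -/
open Complex Filter Topology

/-- The factor `-κ_m/(μ-κ_m) + κ_m⁻¹/(μ-κ_m⁻¹)` for an index `m ≤ l`, and `1`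
for the index `m = l+1`. -/
noncomputable def upsFactor (l : ℕ) (κ : ℕ → ℂ) (m : ℕ) (μ : ℂ) : ℂ :=
  if m ≤ l then -κ m / (μ - κ m) + (κ m)⁻¹ / (μ - (κ m)⁻¹) else 1

/-- The denominator
`D(μ) = ∑_{r=1}^l (1/(μ-κ_r) + 1/(μ-κ_r⁻¹)) - (l-2)/μ - 4μ/(μ²-1)`. -/
noncomputable def upsD (l : ℕ) (κ : ℕ → ℂ) (μ : ℂ) : ℂ :=
  (∑ r ∈ Finset.Icc 1 l, (1 / (μ - κ r) + 1 / (μ - (κ r)⁻¹)))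
    - ((l : ℂ) - 2) / μ - 4 * μ / (μ ^ 2 - 1)

/-- The integrand `Υ_{ijk}(μ) = -N_{ijk}(μ) / (2 μ² D(μ))` computing the residue
contributions to the dual Landau–Ginzburg product of the `D_l` relativistic
Toda spectral curve. -/
noncomputable def Ups (l : ℕ) (κ : ℕ → ℂ) (i j k : ℕ) (μ : ℂ) : ℂ :=
  -(upsFactor l κ i μ * upsFactor l κ j μ * upsFactor l κ k μ)
    / (2 * μ ^ 2 * upsD l κ μ)

/-! Each factor of `N_{ijk}` with index `m ≤ l` is `O(1/μ)` at infinity, while the factor with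
`m = l + 1` is `1`. Writing `4μ/(μ²-1) = 2/(μ-1) + 2/(μ+1)`, `μ · D(μ)` tends to the sum of the
coefficients of the partial fractions of `D`, namely `2l - (l - 2) - 4 = l - 2 ≠ 0`. Hence
`μ · Υ_{ijk}(μ) = -N_{ijk}(μ) / (2 μ D(μ))` tends to `-N_{ijk}(∞) / (2 (l - 2))`. -/

open Bornology

section NormedField

variable {𝕜 : Type*} [NormedField 𝕜]

theorem tendsto_inv_sub_const_cobounded (c : 𝕜) :
    Tendsto (fun x => (x - c)⁻¹) (cobounded 𝕜) (𝓝 0) :=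
  tendsto_inv₀_cobounded.comp (tendsto_sub_const_cobounded c)

theorem tendsto_div_sub_const_cobounded (c : 𝕜) :
    Tendsto (fun x => x / (x - c)) (cobounded 𝕜) (𝓝 1) := by
  have h : Tendsto (fun x => 1 + c * (x - c)⁻¹) (cobounded 𝕜) (𝓝 1) := by
    simpa using ((tendsto_inv_sub_const_cobounded c).const_mul c).const_add 1
  refine h.congr' ?_
  filter_upwards [eventually_ne_cobounded c] with x hx
  field_simp [sub_ne_zero.mpr hx]
  ring

end NormedField

theorem tendsto_upsFactor (l : ℕ) (κ : ℕ → ℂ) (m : ℕ) :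
    Tendsto (upsFactor l κ m) (cobounded ℂ) (𝓝 (if m ≤ l then 0 else 1)) := by
  unfold upsFactor
  split_ifs
  · simpa [div_eq_mul_inv] using
      ((tendsto_inv_sub_const_cobounded (κ m)).const_mul (-κ m)).add
        ((tendsto_inv_sub_const_cobounded (κ m)⁻¹).const_mul (κ m)⁻¹)
  · exact tendsto_const_nhds

theorem mul_upsD_eq (l : ℕ) (κ : ℕ → ℂ) {μ : ℂ} (h0 : μ ≠ 0) (h1 : μ ≠ 1) (h2 : μ ≠ -1) :
    μ * upsD l κ μ = (∑ r ∈ Finset.Icc 1 l, (μ / (μ - κ r) + μ / (μ - (κ r)⁻¹)))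
      - ((l : ℂ) - 2) - 2 * (μ / (μ - 1) + μ / (μ - (-1))) := by
  have h1' : μ - 1 ≠ 0 := sub_ne_zero.mpr h1
  have h2' : μ - (-1) ≠ 0 := sub_ne_zero.mpr h2
  have hsq : μ ^ 2 - 1 = (μ - 1) * (μ - (-1)) := by ring
  simp only [upsD, mul_sub, Finset.mul_sum, mul_add, mul_one_div, hsq]
  field_simp
  ring

theorem tendsto_mul_upsD (l : ℕ) (κ : ℕ → ℂ) :
    Tendsto (fun μ => μ * upsD l κ μ) (cobounded ℂ) (𝓝 ((l : ℂ) - 2)) := by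
  have hsum := tendsto_finsetSum (Finset.Icc 1 l) fun r _ =>
    (tendsto_div_sub_const_cobounded (κ r)).add (tendsto_div_sub_const_cobounded (κ r)⁻¹)
  have hpole := (tendsto_div_sub_const_cobounded (1 : ℂ)).add
    (tendsto_div_sub_const_cobounded (-1 : ℂ))
  have h := (hsum.sub_const ((l : ℂ) - 2)).sub (hpole.const_mul 2)
  rw [Finset.sum_const, Nat.card_Icc] at h
  convert h.congr' ?_ using 2
  · push_cast; ring
  · filter_upwards [eventually_ne_cobounded 0, eventually_ne_cobounded 1,
      eventually_ne_cobounded (-1)] with μ h0 h1 h2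
    exact (mul_upsD_eq l κ h0 h1 h2).symm

theorem mul_Ups_eq (l : ℕ) (κ : ℕ → ℂ) (i j k : ℕ) {μ : ℂ} (h0 : μ ≠ 0) :
    μ * Ups l κ i j k μ = -(upsFactor l κ i μ * upsFactor l κ j μ * upsFactor l κ k μ)
      / (2 * (μ * upsD l κ μ)) := by
  rcases eq_or_ne (upsD l κ μ) 0 with hD | hD
  · simp [Ups, hD]
  · simp only [Ups]
    field_simp

theorem stmt4_general (l : ℕ) (hl : 3 ≤ l) (κ : ℕ → ℂ)
    (i j k : ℕ) (hi : i ∈ Finset.Icc 1 (l + 1)) (hj : j ∈ Finset.Icc 1 (l + 1))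
    (hk : k ∈ Finset.Icc 1 (l + 1)) :
    Tendsto (fun μ : ℂ => μ * Ups l κ i j k μ)
      (Filter.comap (fun z : ℂ => ‖z‖) Filter.atTop)
      (𝓝 (if i = l + 1 ∧ j = l + 1 ∧ k = l + 1
            then -(1 / (2 * ((l : ℂ) - 2))) else 0)) := by
  have hl2 : (2 : ℂ) * ((l : ℂ) - 2) ≠ 0 :=
    mul_ne_zero two_ne_zero (sub_ne_zero.mpr (by exact_mod_cast (by omega : l ≠ 2)))
  have h := ((((tendsto_upsFactor l κ i).mul (tendsto_upsFactor l κ j)).mul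
    (tendsto_upsFactor l κ k)).neg).div ((tendsto_mul_upsD l κ).const_mul 2) hl2
  rw [comap_norm_atTop]
  convert h.congr' ((eventually_ne_cobounded 0).mono fun μ h0 => (mul_Ups_eq l κ i j k h0).symm)
    using 2
  simp only [Finset.mem_Icc] at hi hj hk
  by_cases h1 : i ≤ l <;> by_cases h2 : j ≤ l <;> by_cases h3 : k ≤ l <;>
    simp [h1, h2, h3, neg_div] <;> omega

/-- For all `i, j, k ∈ {1, …, l+1}`, the function
`μ · Υ_{ijk}(μ)` tends, as `|μ| → ∞`, to `-1/(2(l-2))` when `i = j = k = l+1`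
and to `0` otherwise.  Consequently the residue of `Υ_{ijk}` at infinity
(defined as `-lim_{|μ|→∞} μ·Υ_{ijk}(μ)`) equals
`δ_{i,l+1} δ_{j,l+1} δ_{k,l+1} / (2(l-2))`. -/
theorem stmt4 (l : ℕ) (hl : 3 ≤ l) (κ : ℕ → ℂ)
    (hκ : ∀ r ∈ Finset.Icc 1 l, κ r ≠ 0 ∧ κ r ≠ 1 ∧ κ r ≠ -1)
    (hκ' : ∀ r ∈ Finset.Icc 1 l, ∀ s ∈ Finset.Icc 1 l, r ≠ s →
      κ r ≠ κ s ∧ κ r * κ s ≠ 1)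
    (i j k : ℕ) (hi : i ∈ Finset.Icc 1 (l + 1)) (hj : j ∈ Finset.Icc 1 (l + 1))
    (hk : k ∈ Finset.Icc 1 (l + 1)) :
    Tendsto (fun μ : ℂ => μ * Ups l κ i j k μ)
      (Filter.comap (fun z : ℂ => ‖z‖) Filter.atTop)
      (𝓝 (if i = l + 1 ∧ j = l + 1 ∧ k = l + 1
            then -(1 / (2 * ((l : ℂ) - 2))) else 0)) :=
  stmt4_general l hl κ i j k hi hj hk
end

section
/- For every m ∈ {1, …, l}, the sum of the residues of Υ_{m,m,l+1} at μ = κ_m and at μ = κ_m^{−1} exists and equals −1. Precisely: there exists ε > 0 such that for every r with 0 < r < ε, (2πi)^{−1}·(∮_{|μ−κ_m|=r} Υ_{m,m,l+1}(μ) dμ + ∮_{|μ−κ_m^{−1}|=r} Υ_{m,m,l+1}(μ) dμ) = −1. -/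
/-!
Near `a = κ_m` both `N_{m,m,l+1} = (upsFactor m)²` and `D` have poles at `a`, of orders two and
one, with leading coefficients `p = -κ_m` and `1`. Hence `Υ = (μ - a)⁻¹ G(μ)` with `G` holomorphic
at `a` and `G(a) = -p² / (2a²) = -1/2`, and the Cauchy integral formula gives the residue `-1/2`.
The same computation at `κ_m⁻¹`, where `p = κ_m⁻¹`, gives another `-1/2`.
-/

open Complex Filter Topology

theorem exists_circleIntegral_eq_of_eventually_eq_inv_sub_mul {a : ℂ} {f G : ℂ → ℂ}
    (hG : AnalyticAt ℂ G a) (hf : ∀ᶠ μ in 𝓝[≠] a, f μ = (μ - a)⁻¹ * G μ) :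
    ∃ ε > (0 : ℝ), ∀ r : ℝ, 0 < r → r < ε →
      (∮ μ in C(a, r), f μ) = 2 * Real.pi * I * G a := by
  obtain ⟨ε, hε, hball⟩ := Metric.eventually_nhds_iff_ball.mp
    (hG.eventually_analyticAt.and (eventually_nhdsWithin_iff.mp hf))
  refine ⟨ε, hε, fun r hr hrε => ?_⟩
  have hclosed : Metric.closedBall a r ⊆ Metric.ball a ε :=
    Metric.closedBall_subset_ball hrε
  have hGdiff : DifferentiableOn ℂ G (Metric.closedBall a r) := fun μ hμ =>
    (hball μ (hclosed hμ)).1.differentiableAt.differentiableWithinAt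
  calc (∮ μ in C(a, r), f μ) = ∮ μ in C(a, r), (μ - a)⁻¹ • G μ := by
        refine circleIntegral.integral_congr hr.le fun μ hμ => ?_
        have hμa : μ ≠ a := Metric.ne_of_mem_sphere hμ hr.ne'
        exact (hball μ (hclosed (Metric.sphere_subset_closedBall hμ))).2 hμa
    _ = 2 * Real.pi * I * G a := by
        rw [hGdiff.circleIntegral_sub_inv_smul (Metric.mem_ball_self hr), smul_eq_mul]

theorem neg_sq_div_eq_inv_sub_mul {μ a p h R : ℂ} (hμa : μ ≠ a) :
    -((p / (μ - a) + h) * (p / (μ - a) + h)) / (2 * μ ^ 2 * (1 / (μ - a) + R))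
      = (μ - a)⁻¹ * (-(p + (μ - a) * h) ^ 2 / (2 * μ ^ 2 * (1 + (μ - a) * R))) := by
  have hs : μ - a ≠ 0 := sub_ne_zero.2 hμa
  have hD : 1 / (μ - a) + R = (1 + (μ - a) * R) / (μ - a) := by field_simp
  rw [hD]
  rcases eq_or_ne (1 + (μ - a) * R) 0 with h0 | h0
  · -- both sides are junk `x / 0 = 0` values
    simp [h0]
  · field_simp

theorem exists_circleIntegral_neg_sq_div_eq {a p : ℂ} {F D h R : ℂ → ℂ} (ha : a ≠ 0)
    (hh : AnalyticAt ℂ h a) (hR : AnalyticAt ℂ R a)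
    (hF : ∀ μ, F μ = p / (μ - a) + h μ) (hD : ∀ μ, D μ = 1 / (μ - a) + R μ) :
    ∃ ε > (0 : ℝ), ∀ r : ℝ, 0 < r → r < ε →
      (∮ μ in C(a, r), -(F μ * F μ) / (2 * μ ^ 2 * D μ))
        = 2 * Real.pi * I * (-p ^ 2 / (2 * a ^ 2)) := by
  have hG : AnalyticAt ℂ
      (fun μ => -(p + (μ - a) * h μ) ^ 2 / (2 * μ ^ 2 * (1 + (μ - a) * R μ))) a := by
    fun_prop (disch := simp [ha])
  have hf : ∀ᶠ μ in 𝓝[≠] a, -(F μ * F μ) / (2 * μ ^ 2 * D μ)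
      = (μ - a)⁻¹ * (-(p + (μ - a) * h μ) ^ 2 / (2 * μ ^ 2 * (1 + (μ - a) * R μ))) := by
    filter_upwards [self_mem_nhdsWithin] with μ hμa
    rw [hF, hD, neg_sq_div_eq_inv_sub_mul hμa]
  simpa using exists_circleIntegral_eq_of_eventually_eq_inv_sub_mul hG hf

theorem Ups_last (l : ℕ) (κ : ℕ → ℂ) (i j : ℕ) (μ : ℂ) :
    Ups l κ i j (l + 1) μ
      = -(upsFactor l κ i μ * upsFactor l κ j μ) / (2 * μ ^ 2 * upsD l κ μ) := by
  simp [Ups, upsFactor]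

theorem upsFactor_of_le {l m : ℕ} (κ : ℕ → ℂ) (hm : m ≤ l) (μ : ℂ) :
    upsFactor l κ m μ = -κ m / (μ - κ m) + (κ m)⁻¹ / (μ - (κ m)⁻¹) :=
  if_pos hm

noncomputable def upsDRest (l : ℕ) (κ : ℕ → ℂ) (m : ℕ) (μ : ℂ) : ℂ :=
  (∑ r ∈ (Finset.Icc 1 l).erase m, (1 / (μ - κ r) + 1 / (μ - (κ r)⁻¹)))
    - ((l : ℂ) - 2) / μ - 4 * μ / (μ ^ 2 - 1)

theorem upsD_eq_add_upsDRest {l m : ℕ} (κ : ℕ → ℂ) (hm : m ∈ Finset.Icc 1 l) (μ : ℂ) :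
    upsD l κ μ = 1 / (μ - κ m) + 1 / (μ - (κ m)⁻¹) + upsDRest l κ m μ := by
  rw [upsD, upsDRest, ← Finset.add_sum_erase _ _ hm]
  ring

theorem analyticAt_upsDRest {l m : ℕ} {κ : ℕ → ℂ} {a : ℂ} (ha : a ≠ 0) (ha2 : a ^ 2 ≠ 1)
    (hκa : ∀ r ∈ (Finset.Icc 1 l).erase m, a ≠ κ r ∧ a ≠ (κ r)⁻¹) :
    AnalyticAt ℂ (upsDRest l κ m) a := by
  have hsum : AnalyticAt ℂ
      (fun μ => ∑ r ∈ (Finset.Icc 1 l).erase m, (1 / (μ - κ r) + 1 / (μ - (κ r)⁻¹))) a :=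
    Finset.analyticAt_fun_sum _ fun r hr => by
      obtain ⟨h1, h2⟩ := hκa r hr
      fun_prop (disch := simp [sub_ne_zero, h1, h2])
  unfold upsDRest
  fun_prop (disch := simp [sub_ne_zero, ha2])

theorem exists_circleIntegral_Ups_eq {l m : ℕ} {κ : ℕ → ℂ} {a b p q : ℂ}
    (ha : a ≠ 0) (ha2 : a ^ 2 ≠ 1) (hab : a ≠ b)
    (hκa : ∀ r ∈ (Finset.Icc 1 l).erase m, a ≠ κ r ∧ a ≠ (κ r)⁻¹)
    (hF : ∀ μ, upsFactor l κ m μ = p / (μ - a) + q / (μ - b))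
    (hD : ∀ μ, upsD l κ μ = 1 / (μ - a) + (1 / (μ - b) + upsDRest l κ m μ)) :
    ∃ ε > (0 : ℝ), ∀ r : ℝ, 0 < r → r < ε →
      (∮ μ in C(a, r), Ups l κ m m (l + 1) μ) = 2 * Real.pi * I * (-p ^ 2 / (2 * a ^ 2)) := by
  have hh : AnalyticAt ℂ (fun μ => q / (μ - b)) a := by
    fun_prop (disch := exact sub_ne_zero.2 hab)
  have hR : AnalyticAt ℂ (fun μ => 1 / (μ - b) + upsDRest l κ m μ) a := by
    have hrest := analyticAt_upsDRest ha ha2 hκa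
    fun_prop (disch := exact sub_ne_zero.2 hab)
  simpa only [Ups_last] using exists_circleIntegral_neg_sq_div_eq ha hh hR hF hD

theorem ne_and_ne_inv_and_inv_ne_and_inv_ne_inv {x y : ℂ} (hy : y ≠ 0) (hxy : x ≠ y)
    (hxy' : x * y ≠ 1) : (x ≠ y ∧ x ≠ y⁻¹) ∧ (x⁻¹ ≠ y ∧ x⁻¹ ≠ y⁻¹) := by
  refine ⟨⟨hxy, fun h => hxy' ((mul_eq_one_iff_eq_inv₀ hy).2 h)⟩,
    ⟨fun h => hxy' ?_, fun h => hxy (inv_injective h)⟩⟩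
  have hx : x ≠ 0 := by
    rintro rfl
    exact hy (by simpa using h.symm)
  exact (mul_eq_one_iff_inv_eq₀ hx).2 h

theorem stmt7_general (l : ℕ) (κ : ℕ → ℂ)
    (hκ : ∀ r ∈ Finset.Icc 1 l, κ r ≠ 0 ∧ κ r ≠ 1 ∧ κ r ≠ -1)
    (hκ' : ∀ r ∈ Finset.Icc 1 l, ∀ s ∈ Finset.Icc 1 l, r ≠ s →
      κ r ≠ κ s ∧ κ r * κ s ≠ 1)
    (m : ℕ) (hm : m ∈ Finset.Icc 1 l) :
    ∃ ε > (0 : ℝ), ∀ r : ℝ, 0 < r → r < ε →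
      (2 * Real.pi * Complex.I)⁻¹ *
        ((∮ μ in C(κ m, r), Ups l κ m m (l + 1) μ) +
          (∮ μ in C((κ m)⁻¹, r), Ups l κ m m (l + 1) μ)) = -1 := by
  obtain ⟨h0, h1, hm1⟩ := hκ m hm
  have hsq : κ m ^ 2 ≠ 1 := sq_ne_one_iff.2 ⟨h1, hm1⟩
  have hsq' : (κ m)⁻¹ ^ 2 ≠ 1 := by rwa [inv_pow, inv_ne_one]
  have hinv : κ m ≠ (κ m)⁻¹ := by
    rw [Ne, self_eq_inv₀]
    tauto
  have hother : ∀ r ∈ (Finset.Icc 1 l).erase m,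
      (κ m ≠ κ r ∧ κ m ≠ (κ r)⁻¹) ∧ ((κ m)⁻¹ ≠ κ r ∧ (κ m)⁻¹ ≠ (κ r)⁻¹) := fun r hr =>
    have hrI := Finset.mem_of_mem_erase hr
    have hrm := hκ' m hm r hrI (Finset.ne_of_mem_erase hr).symm
    ne_and_ne_inv_and_inv_ne_and_inv_ne_inv (hκ r hrI).1 hrm.1 hrm.2
  have hFactor := upsFactor_of_le κ (Finset.mem_Icc.mp hm).2
  obtain ⟨εA, hεA, hA⟩ := exists_circleIntegral_Ups_eq h0 hsq hinv
    (fun r hr => (hother r hr).1) hFactor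
    (fun μ => by rw [upsD_eq_add_upsDRest κ hm, add_assoc])
  obtain ⟨εB, hεB, hB⟩ := exists_circleIntegral_Ups_eq (inv_ne_zero h0) hsq' hinv.symm
    (fun r hr => (hother r hr).2) (fun μ => by rw [hFactor, add_comm])
    (fun μ => by rw [upsD_eq_add_upsDRest κ hm, add_comm (1 / _), add_assoc])
  refine ⟨min εA εB, lt_min hεA hεB, fun r hr hrε => ?_⟩
  rw [hA r hr (hrε.trans_le (min_le_left _ _)), hB r hr (hrε.trans_le (min_le_right _ _))]
  field_simp
  ring

/-- For every `m ∈ {1, …, l}`, the sum of the residues of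
`Υ_{m,m,l+1}` at `μ = κ_m` and at `μ = κ_m⁻¹` exists and equals `-1`, the
residues being expressed as circle integrals of sufficiently small radius. -/
theorem stmt7 (l : ℕ) (hl : 3 ≤ l) (κ : ℕ → ℂ)
    (hκ : ∀ r ∈ Finset.Icc 1 l, κ r ≠ 0 ∧ κ r ≠ 1 ∧ κ r ≠ -1)
    (hκ' : ∀ r ∈ Finset.Icc 1 l, ∀ s ∈ Finset.Icc 1 l, r ≠ s →
      κ r ≠ κ s ∧ κ r * κ s ≠ 1)
    (m : ℕ) (hm : m ∈ Finset.Icc 1 l) :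
    ∃ ε > (0 : ℝ), ∀ r : ℝ, 0 < r → r < ε →
      (2 * Real.pi * Complex.I)⁻¹ *
        ((∮ μ in C(κ m, r), Ups l κ m m (l + 1) μ) +
          (∮ μ in C((κ m)⁻¹, r), Ups l κ m m (l + 1) μ)) = -1 :=
  stmt7_general l κ hκ hκ' m hm
end
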